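/- arXiv:2302.02605 — 4 statements merged into one kernel-verified Lean document; each statement's English description precedes it below -/
import Mathlib

section
/- Let A ∈ ℝ^{n×n} be symmetric with orthonormal eigenvectors e₁,…,e_n and eigenvalues λ₁ > λ₂ > … > λ_n > 0. For q < n, let E_q = [e₁,…,e_q], Λ_q = diag(λ₁,…,λ_q), and Q = E_q (I_q − λ_{q+1} Λ_q⁻¹) E_qᵀ. Then the eigenvalues of (I_n − Q) A are exactly λ_{q+1} (with multiplicity q+1) and λ_{q+2}, …, λ_n. In particular, the largest eigenvalue of (I_n − Q) A is λ_{q+1}. -/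
open Matrix

private lemma sum_mulVec' {n m : ℕ} (M : Fin m → Matrix (Fin n) (Fin n) ℝ) (v : Fin n → ℝ) :
    (∑ i, M i) *ᵥ v = ∑ i, (M i) *ᵥ v := by
  ext k
  simp [Matrix.mulVec, dotProduct, Matrix.sum_apply, Finset.sum_mul]
  rw [Finset.sum_comm]

private lemma dot_sum' {n m : ℕ} (u : Fin n → ℝ) (s : Finset (Fin m)) (f : Fin m → Fin n → ℝ) :
    u ⬝ᵥ ∑ j ∈ s, f j = ∑ j ∈ s, u ⬝ᵥ f j := by
  simp only [dotProduct, Finset.sum_apply, Finset.mul_sum]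
  rw [Finset.sum_comm]

private lemma vecMulVec_mulVec' {n : ℕ} (u w v : Fin n → ℝ) :
    (vecMulVec u w) *ᵥ v = (w ⬝ᵥ v) • u := by
  ext k
  simp only [Matrix.mulVec, vecMulVec, dotProduct, Matrix.of_apply, Finset.smul_sum,
    smul_eq_mul, Pi.smul_apply]
  rw [Finset.sum_mul]
  exact Finset.sum_congr rfl fun i _ => by ring

theorem stmt_5 {n q : ℕ} (hq : q < n)
    (A : Matrix (Fin n) (Fin n) ℝ) (hA : A.IsSymm)
    (e : Fin n → Fin n → ℝ)
    (horth : ∀ i j, e i ⬝ᵥ e j = if i = j then (1 : ℝ) else 0)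
    (lam : Fin n → ℝ)
    (hdec : ∀ i j : Fin n, i < j → lam j < lam i)
    (hpos : ∀ i, 0 < lam i)
    (heig : ∀ i, A.mulVec (e i) = lam i • e i)
    (Q : Matrix (Fin n) (Fin n) ℝ)
    (hQ : Q = ∑ i : Fin n, if (i : ℕ) < q then
        (1 - lam ⟨q, hq⟩ / lam i) • vecMulVec (e i) (e i) else 0) :
    (∀ μ : ℝ, Module.End.HasEigenvalue (Matrix.toLin' ((1 - Q) * A)) μ ↔
        ∃ i : Fin n, q ≤ (i : ℕ) ∧ μ = lam i) ∧
    Module.finrank ℝ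
        (Module.End.eigenspace (Matrix.toLin' ((1 - Q) * A)) (lam ⟨q, hq⟩)) = q + 1 := by
  set qf : Fin n := ⟨q, hq⟩ with hqf
  set lq : ℝ := lam qf with hlq
  set T := Matrix.toLin' ((1 - Q) * A) with hT
  set μ : Fin n → ℝ := fun j => if (j : ℕ) < q then lq else lam j with hμdef
  have hne : ∀ i, e i ≠ 0 := by
    intro i h
    have h2 := horth i i
    simp [h] at h2
  -- action of Q on e j
  have hQe : ∀ j, Q *ᵥ (e j) = (if (j : ℕ) < q then (1 - lq / lam j) • e j else 0) := by
    intro j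
    rw [hQ, sum_mulVec']
    have hterm : ∀ i : Fin n,
        (if (i : ℕ) < q then (1 - lq / lam i) • vecMulVec (e i) (e i) else 0) *ᵥ e j
        = if i = j then (if (j : ℕ) < q then (1 - lq / lam j) • e j else 0) else 0 := by
      intro i
      by_cases hij : i = j
      · subst hij
        by_cases h : (i : ℕ) < q
        · simp [h, Matrix.smul_mulVec, vecMulVec_mulVec', horth i i]
        · simp [h]
      · by_cases h : (i : ℕ) < q
        · simp [h, hij, Matrix.smul_mulVec, vecMulVec_mulVec', horth i j]
        · simp [h, hij]
    rw [Finset.sum_congr rfl fun i _ => hterm i]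
    simp
  -- action of T on e j
  have hTe : ∀ j, T (e j) = μ j • e j := by
    intro j
    rw [hT, Matrix.toLin'_apply, ← Matrix.mulVec_mulVec, heig j, Matrix.mulVec_smul,
      Matrix.sub_mulVec, Matrix.one_mulVec, hQe j]
    by_cases h : (j : ℕ) < q
    · have hj0 : lam j ≠ 0 := (hpos j).ne'
      simp only [h, if_pos, if_true, hμdef]
      rw [smul_sub, smul_smul, ← sub_smul]
      congr 1
      field_simp
      ring
    · simp [h, hμdef]
  -- linear independence of e
  have hli : LinearIndependent ℝ e := by
    rw [linearIndependent_iff']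
    intro s g hg i hi
    have h2 := congrArg (fun v => e i ⬝ᵥ v) hg
    simp only [dot_sum', dotProduct_smul, horth, smul_eq_mul, dotProduct_zero,
      mul_ite, mul_one, mul_zero, Finset.sum_ite_eq, hi, if_true] at h2
    exact h2
  have hcard : Fintype.card (Fin n) = Module.finrank ℝ (Fin n → ℝ) := by simp
  have hn0 : 0 < n := lt_of_le_of_lt (Nat.zero_le q) hq
  haveI : Nonempty (Fin n) := ⟨⟨0, hn0⟩⟩
  set B := basisOfLinearIndependentOfCardEqFinrank hli hcard with hB
  have hBe : ⇑B = e := coe_basisOfLinearIndependentOfCardEqFinrank hli hcard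
  -- coefficients relation for eigen-equation
  have hcoeff : ∀ (v : Fin n → ℝ) (ν : ℝ), T v = ν • v →
      ∀ j, (B.repr v) j * μ j = ν * (B.repr v) j := by
    intro v ν hv j
    have hsum : v = ∑ k, (B.repr v) k • e k := by
      conv_lhs => rw [← B.sum_repr v]
      simp [hBe]
    have h1 : T v = ∑ k, ((B.repr v) k * μ k) • e k := by
      conv_lhs => rw [hsum]
      rw [map_sum]
      refine Finset.sum_congr rfl fun k _ => ?_
      rw [_root_.map_smul, hTe k, smul_smul]
    have h2 : ν • v = ∑ k, (ν * (B.repr v) k) • e k := by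
      conv_lhs => rw [hsum]
      rw [Finset.smul_sum]
      refine Finset.sum_congr rfl fun k _ => ?_
      rw [smul_smul]
    have h3 : ∑ k, (((B.repr v) k * μ k) - (ν * (B.repr v) k)) • e k = 0 := by
      simp only [sub_smul, Finset.sum_sub_distrib, ← h1, ← h2, hv, sub_self]
    have := linearIndependent_iff'.1 hli Finset.univ _ h3 j (Finset.mem_univ j)
    linarith [this]
  have hμq : ∀ j : Fin n, (j : ℕ) ≤ q → μ j = lq := by
    intro j hj
    by_cases h : (j : ℕ) < q
    · simp [hμdef, h]
    · have : (j : ℕ) = q := le_antisymm hj (not_lt.1 h)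
      have : j = qf := Fin.ext this
      simp [hμdef, h, this, hlq]
  have hμgt : ∀ j : Fin n, q < (j : ℕ) → μ j ≠ lq := by
    intro j hj
    have : μ j = lam j := by simp [hμdef, Nat.not_lt.2 (le_of_lt hj)]
    rw [this]
    exact ne_of_lt (hdec qf j hj)
  constructor
  · intro ν
    constructor
    · intro hev
      obtain ⟨v, hv⟩ := hev.exists_hasEigenvector
      rw [Module.End.hasEigenvector_iff] at hv
      obtain ⟨hv1, hv0⟩ := hv
      have hveq : T v = ν • v := Module.End.mem_eigenspace_iff.1 hv1
      have hrepr0 : B.repr v ≠ 0 := fun h => hv0 (by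
        have := B.repr.injective (a₁ := v) (a₂ := 0) (by simp [h])
        exact this)
      obtain ⟨j, hj⟩ : ∃ j, (B.repr v) j ≠ 0 := by
        by_contra h
        push_neg at h
        exact hrepr0 (Finsupp.ext h)
      have := hcoeff v ν hveq j
      have hνμ : ν = μ j := by
        have : (B.repr v) j * (μ j - ν) = 0 := by ring_nf; linarith [this]
        rcases mul_eq_zero.1 this with h | h
        · exact absurd h hj
        · linarith [sub_eq_zero.1 h]
      by_cases h : (j : ℕ) < q
      · exact ⟨qf, le_refl q, by simpa [hμdef, h] using hνμ⟩
      · exact ⟨j, not_lt.1 h, by simpa [hμdef, h] using hνμ⟩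
    · rintro ⟨i, hi, rfl⟩
      have hμi : μ i = lam i := by simp [hμdef, Nat.not_lt.2 hi]
      exact Module.End.hasEigenvalue_of_hasEigenvector
        ((Module.End.hasEigenvector_iff).2
          ⟨Module.End.mem_eigenspace_iff.2 (by rw [hTe i, hμi]), hne i⟩)
  · -- eigenspace dimension
    set S : Set (Fin n) := {j : Fin n | (j : ℕ) ≤ q} with hS
    have hspan : Module.End.eigenspace T lq = Submodule.span ℝ (e '' S) := by
      apply le_antisymm
      · intro v hv
        have hveq : T v = lq • v := Module.End.mem_eigenspace_iff.1 hv
        have hc := hcoeff v lq hveq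
        have hzero : ∀ j : Fin n, j ∉ S → (B.repr v) j = 0 := by
          intro j hj
          have hjq : q < (j : ℕ) := by
            simp only [hS, Set.mem_setOf_eq, not_le] at hj
            exact hj
          have := hc j
          have hμj := hμgt j hjq
          by_contra hc0
          apply hμj
          have : μ j = lq := by
            have h2 : (B.repr v) j * (μ j - lq) = 0 := by ring_nf; linarith [this]
            rcases mul_eq_zero.1 h2 with h | h
            · exact absurd h hc0
            · linarith [sub_eq_zero.1 h]
          exact this
        have hsum : v = ∑ k, (B.repr v) k • e k := by
          conv_lhs => rw [← B.sum_repr v]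
          simp [hBe]
        rw [hsum]
        apply Submodule.sum_mem
        intro k _
        by_cases hk : k ∈ S
        · exact Submodule.smul_mem _ _ (Submodule.subset_span ⟨k, hk, rfl⟩)
        · rw [hzero k hk, zero_smul]; exact Submodule.zero_mem _
      · rw [Submodule.span_le]
        rintro x ⟨j, hj, rfl⟩
        exact Module.End.mem_eigenspace_iff.2 (by rw [hTe j, hμq j hj])
    rw [hspan]
    have hliS : LinearIndependent ℝ (fun x : (e '' S) => (x : Fin n → ℝ)) := by
      have h1 : LinearIndependent ℝ (fun x : S => e x) :=
        hli.comp ((↑) : S → Fin n) Subtype.val_injective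
      exact LinearIndepOn.id_image h1
    haveI : Fintype (e '' S) := Fintype.ofFinite _
    rw [finrank_span_set_eq_card hliS]
    have hinj : Set.InjOn e S := Set.injOn_of_injective hli.injective
    rw [Set.toFinset_image]
    rw [Finset.card_image_of_injOn (by simpa [Set.coe_toFinset] using hinj)]
    have : S.toFinset = Finset.univ.filter (fun j : Fin n => (j : ℕ) ≤ q) := by
      ext j; simp [hS]
    rw [this]
    -- count: there are q+1 elements of Fin n with value ≤ q
    have : (Finset.univ.filter (fun j : Fin n => (j : ℕ) ≤ q)).card = q + 1 := by
      rw [Finset.card_eq_of_bijective (fun i hi => ⟨i, lt_of_le_of_lt (Nat.lt_succ_iff.1 hi) hq⟩)]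
      · intro a ha
        simp only [Finset.mem_filter, Finset.mem_univ, true_and] at ha
        exact ⟨a, Nat.lt_succ_of_le ha, Fin.ext rfl⟩
      · intro i hi
        simp [Nat.lt_succ_iff.1 hi]
      · intro i j hi hj hij
        simpa using congrArg Fin.val hij
    exact this
end

section
/- Let H be an RKHS with kernel K over points x₁,…,x_n, and for each i ≤ q let ψᵢ = Σⱼ (e_{ij}/√λᵢ) K(·,x_j) where K(X,X) eᵢ = λᵢ eᵢ with λᵢ > 0 and the eᵢ orthonormal in ℝ^n. Let 𝒫 = I − Σᵢ (1 − λ_{q+1}/λᵢ) ψᵢ ⊗ ψᵢ. Then for any a ∈ ℝ^n, 𝒫(K(·,X) a) = K(·,X)(I_n − Q) a, where Q = E_q (I_q − λ_{q+1} Λ_q⁻¹) E_qᵀ, E_q = [e₁,…,e_q], Λ_q = diag(λ₁,…,λ_q). -/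
open Matrix
open scoped InnerProductSpace

theorem stmt_14 {H : Type*} [NormedAddCommGroup H] [InnerProductSpace ℝ H] [CompleteSpace H]
    {n q : ℕ} (Kfun : Fin n → H)
    (Kmat : Matrix (Fin n) (Fin n) ℝ)
    (hKmat : ∀ i j, Kmat i j = ⟪Kfun i, Kfun j⟫_ℝ)
    (e : Fin q → Fin n → ℝ)
    (horth : ∀ i j, e i ⬝ᵥ e j = if i = j then (1 : ℝ) else 0)
    (lam : Fin q → ℝ) (hpos : ∀ i, 0 < lam i)
    (heig : ∀ i, Kmat.mulVec (e i) = lam i • e i)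
    (lamq1 : ℝ) (hlamq1 : 0 < lamq1) (hle : ∀ i, lamq1 ≤ lam i) :
    ∀ a : Fin n → ℝ,
      (∑ j, a j • Kfun j)
        - ∑ i, (1 - lamq1 / lam i) •
            ⟪(Real.sqrt (lam i))⁻¹ • ∑ j, e i j • Kfun j, ∑ j, a j • Kfun j⟫_ℝ •
              ((Real.sqrt (lam i))⁻¹ • ∑ j, e i j • Kfun j)
      = ∑ j, ((1 - ∑ i, (1 - lamq1 / lam i) • vecMulVec (e i) (e i) :
          Matrix (Fin n) (Fin n) ℝ).mulVec a) j • Kfun j := by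
  intro a
  have hsym : Kmat.IsSymm := by
    ext i j
    simp only [Matrix.transpose_apply, hKmat]
    exact real_inner_comm _ _
  have hinner : ∀ i : Fin q,
      ⟪∑ j, e i j • Kfun j, ∑ j, a j • Kfun j⟫_ℝ = lam i * (e i ⬝ᵥ a) := by
    intro i
    have h1 : ⟪∑ j, e i j • Kfun j, ∑ j, a j • Kfun j⟫_ℝ
        = e i ⬝ᵥ Kmat.mulVec a := by
      rw [sum_inner]
      simp only [inner_sum, real_inner_smul_left, real_inner_smul_right, ← hKmat]
      simp [dotProduct, mulVec, Finset.mul_sum, mul_comm, mul_left_comm]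
    rw [h1, dotProduct_mulVec, ← mulVec_transpose, hsym.eq, heig i]
    simp [smul_dotProduct]
  have hc : ∀ i : Fin q, (Real.sqrt (lam i))⁻¹ * (Real.sqrt (lam i))⁻¹ = (lam i)⁻¹ := by
    intro i
    rw [← mul_inv]
    rw [Real.mul_self_sqrt (hpos i).le]
  -- simplify LHS term
  have hterm : ∀ i : Fin q,
      (1 - lamq1 / lam i) •
          ⟪(Real.sqrt (lam i))⁻¹ • ∑ j, e i j • Kfun j, ∑ j, a j • Kfun j⟫_ℝ •
            ((Real.sqrt (lam i))⁻¹ • ∑ j, e i j • Kfun j)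
        = ∑ j, ((1 - lamq1 / lam i) * (e i ⬝ᵥ a) * e i j) • Kfun j := by
    intro i
    rw [real_inner_smul_left, hinner i, smul_smul, smul_smul]
    rw [Finset.smul_sum]
    refine Finset.sum_congr rfl fun j _ => ?_
    rw [smul_smul]
    congr 1
    rw [show (1 - lamq1 / lam i) * ((Real.sqrt (lam i))⁻¹ * (lam i * (e i ⬝ᵥ a)))
          * (Real.sqrt (lam i))⁻¹ * e i j
        = (1 - lamq1 / lam i) * (((Real.sqrt (lam i))⁻¹ * (Real.sqrt (lam i))⁻¹)
          * lam i * (e i ⬝ᵥ a)) * e i j from by ring,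
      hc i, inv_mul_cancel₀ (hpos i).ne', one_mul]
  -- RHS
  have hRHS : ∀ j, ((1 - ∑ i, (1 - lamq1 / lam i) • vecMulVec (e i) (e i) :
        Matrix (Fin n) (Fin n) ℝ).mulVec a) j
      = a j - ∑ i, (1 - lamq1 / lam i) * (e i ⬝ᵥ a) * e i j := by
    intro j
    rw [sub_mulVec, one_mulVec]
    rw [Pi.sub_apply]
    congr 1
    simp only [mulVec, dotProduct, Matrix.sum_apply, Matrix.smul_apply,
      vecMulVec_apply, smul_eq_mul, Finset.sum_mul]
    rw [Finset.sum_comm]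
    refine Finset.sum_congr rfl fun i _ => ?_
    simp only [Finset.mul_sum, Finset.sum_mul]
    exact Finset.sum_congr rfl fun k _ => by ring
  calc (∑ j, a j • Kfun j)
        - ∑ i, (1 - lamq1 / lam i) •
            ⟪(Real.sqrt (lam i))⁻¹ • ∑ j, e i j • Kfun j, ∑ j, a j • Kfun j⟫_ℝ •
              ((Real.sqrt (lam i))⁻¹ • ∑ j, e i j • Kfun j)
      = (∑ j, a j • Kfun j)
        - ∑ i, ∑ j, ((1 - lamq1 / lam i) * (e i ⬝ᵥ a) * e i j) • Kfun j := by
        rw [Finset.sum_congr rfl fun i _ => hterm i]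
    _ = ∑ j, (a j - ∑ i, (1 - lamq1 / lam i) * (e i ⬝ᵥ a) * e i j) • Kfun j := by
        rw [Finset.sum_comm]
        rw [← Finset.sum_sub_distrib]
        refine Finset.sum_congr rfl fun j _ => ?_
        rw [sub_smul, Finset.sum_smul]
    _ = ∑ j, ((1 - ∑ i, (1 - lamq1 / lam i) • vecMulVec (e i) (e i) :
          Matrix (Fin n) (Fin n) ℝ).mulVec a) j • Kfun j := by
        refine Finset.sum_congr rfl fun j _ => ?_
        rw [hRHS j]
end

section
/- Let H be an RKHS with kernel K, let X_s = {x_{i_1},…,x_{i_s}} with Gram matrix K_s = K(X_s,X_s), let (λᵢ, eᵢ) for i ≤ q be orthonormal eigenpairs of K_s with λᵢ > 0, and set ψᵢ = K(·,X_s) eᵢ/√λᵢ. Define 𝒫_s = I − Σ_{i=1}^q (1 − λ_{q+1}/λᵢ) ψᵢ ⊗ ψᵢ. Then for any points X_m = {u₁,…,u_m} and a ∈ ℝ^m: 𝒫_s(K(·,X_m) a) = K(·,X_m) a − K(·,X_s) Q_s K(X_s, X_m) a, where Q_s = E_q (I_q − λ_{q+1} Λ_q⁻¹) Λ_q⁻¹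 E_qᵀ ∈ ℝ^{s×s}. -/
open Matrix
open scoped InnerProductSpace

/-- Nyström preconditioning: `Ks k = K(·, x_{i_k})` are the kernel sections of the Nyström
subsample, `Km j = K(·, u_j)` those of the minibatch, `Kmat = K(X_s, X_s)`,
`Ksm = K(X_s, X_m)`, and `ψᵢ = K(·,X_s) eᵢ/√λᵢ`. -/
theorem stmt_15 {H : Type*} [NormedAddCommGroup H] [InnerProductSpace ℝ H] [CompleteSpace H]
    {s m q : ℕ} (Ks : Fin s → H) (Km : Fin m → H)
    (Kmat : Matrix (Fin s) (Fin s) ℝ)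
    (hKmat : ∀ i j, Kmat i j = ⟪Ks i, Ks j⟫_ℝ)
    (Ksm : Matrix (Fin s) (Fin m) ℝ)
    (hKsm : ∀ i j, Ksm i j = ⟪Ks i, Km j⟫_ℝ)
    (e : Fin q → Fin s → ℝ)
    (horth : ∀ i j, e i ⬝ᵥ e j = if i = j then (1 : ℝ) else 0)
    (lam : Fin q → ℝ) (hpos : ∀ i, 0 < lam i)
    (heig : ∀ i, Kmat.mulVec (e i) = lam i • e i)
    (lamq1 : ℝ) (hlamq1 : 0 < lamq1) (hle : ∀ i, lamq1 ≤ lam i) :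
    ∀ a : Fin m → ℝ,
      (∑ j, a j • Km j)
        - ∑ i, (1 - lamq1 / lam i) •
            ⟪(Real.sqrt (lam i))⁻¹ • ∑ k, e i k • Ks k, ∑ j, a j • Km j⟫_ℝ •
              ((Real.sqrt (lam i))⁻¹ • ∑ k, e i k • Ks k)
      = (∑ j, a j • Km j)
        - ∑ k, ((∑ i, ((1 - lamq1 / lam i) / lam i) • vecMulVec (e i) (e i) :
            Matrix (Fin s) (Fin s) ℝ).mulVec (Ksm.mulVec a)) k • Ks k := by
  intro a
  congr 1
  set v : Fin s → ℝ := Ksm.mulVec a with hv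
  have hinner : ∀ k : Fin s, ⟪Ks k, ∑ j, a j • Km j⟫_ℝ = v k := by
    intro k
    simp [hv, inner_sum, inner_smul_right, Matrix.mulVec, dotProduct, hKsm, mul_comm]
  have hsq : ∀ i : Fin q, (Real.sqrt (lam i))⁻¹ * (Real.sqrt (lam i))⁻¹ = (lam i)⁻¹ := by
    intro i
    rw [← mul_inv, Real.mul_self_sqrt (hpos i).le]
  have key : ∀ i : Fin q,
      (1 - lamq1 / lam i) •
        ⟪(Real.sqrt (lam i))⁻¹ • ∑ k, e i k • Ks k, ∑ j, a j • Km j⟫_ℝ •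
          ((Real.sqrt (lam i))⁻¹ • ∑ k, e i k • Ks k)
      = ∑ k, (((1 - lamq1 / lam i) / lam i) * ((e i ⬝ᵥ v) * e i k)) • Ks k := by
    intro i
    rw [real_inner_smul_left, sum_inner]
    simp only [real_inner_smul_left, hinner]
    rw [smul_smul, smul_smul, Finset.smul_sum]
    refine Finset.sum_congr rfl fun k _ => ?_
    rw [smul_smul]
    congr 1
    simp only [dotProduct]
    field_simp
    rw [Real.sq_sqrt (hpos i).le]
  calc (∑ i, (1 - lamq1 / lam i) •
            ⟪(Real.sqrt (lam i))⁻¹ • ∑ k, e i k • Ks k, ∑ j, a j • Km j⟫_ℝ •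
              ((Real.sqrt (lam i))⁻¹ • ∑ k, e i k • Ks k))
      = ∑ i, ∑ k, (((1 - lamq1 / lam i) / lam i) * ((e i ⬝ᵥ v) * e i k)) • Ks k := by
        exact Finset.sum_congr rfl fun i _ => key i
    _ = ∑ k, ((∑ i, ((1 - lamq1 / lam i) / lam i) • vecMulVec (e i) (e i) :
            Matrix (Fin s) (Fin s) ℝ).mulVec v) k • Ks k := by
        rw [Finset.sum_comm]
        refine Finset.sum_congr rfl fun k _ => ?_
        rw [← Finset.sum_smul]
        congr 1
        simp only [Matrix.sum_apply, Matrix.mulVec, dotProduct, Matrix.smul_apply,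
          vecMulVec_apply, smul_eq_mul, Finset.sum_mul, Finset.mul_sum]
        rw [Finset.sum_comm]
        refine Finset.sum_congr rfl fun i _ => Finset.sum_congr rfl fun l _ => by ring
end

section
/- Let K(X,X) ∈ ℝ^{n×n} be symmetric positive definite with orthonormal eigendecomposition K(X,X) = E Λ Eᵀ, and let Q = E_q(I_q − λ_{q+1}Λ_q⁻¹)E_qᵀ. Define f^t = K(·,X) α^t in the RKHS H and 𝒫 the preconditioner with eigenfunctions ψᵢ = K(·,X)eᵢ/√λᵢ. If α^{t+1} = α^t − η(I_n − Q)(K(X,X)α^t − y), then f^{t+1} = f^t − η 𝒫(∇_f L(f^t)), where ∇_f L(f^t) = K(·,X)(f^t(X) − y) and f^t(X) = K(X,X)α^t. -/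
open Matrix
open scoped InnerProductSpace

lemma aux_sum_mulVec {n : ℕ} {ι : Type*} (s : Finset ι) (A : ι → Matrix (Fin n) (Fin n) ℝ)
    (x : Fin n → ℝ) : (∑ i ∈ s, A i).mulVec x = ∑ i ∈ s, (A i).mulVec x := by
  funext j
  simp only [Matrix.mulVec, dotProduct, Matrix.sum_apply, Finset.sum_apply, Finset.sum_mul]
  rw [Finset.sum_comm]

lemma aux_vecMulVec_mulVec {n : ℕ} (w v x : Fin n → ℝ) :
    (vecMulVec w v).mulVec x = (v ⬝ᵥ x) • w := by
  funext j
  simp only [Matrix.mulVec, vecMulVec_apply, dotProduct, Pi.smul_apply, smul_eq_mul,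
    Finset.sum_mul]
  refine Finset.sum_congr rfl fun i _ => ?_
  ring

/-- EigenPro ℝⁿ-equivalence: `Kfun i = K(·, xᵢ)`, `Kmat = K(X,X)` positive definite with
orthonormal eigenpairs `(lam i, e i)`, `Q = E_q(I_q − λ_{q+1}Λ_q⁻¹)E_qᵀ`,
`ψᵢ = K(·,X)eᵢ/√λᵢ`, `f^t = K(·,X)α^t`, and `∇_f L(f^t) = K(·,X)(f^t(X) − y)`
with `f^t(X)ᵢ = ⟪Kfun i, f^t⟫`. -/
theorem stmt_16 {H : Type*} [NormedAddCommGroup H] [InnerProductSpace ℝ H] [CompleteSpace H]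
    {n q : ℕ} (hq : q < n) (Kfun : Fin n → H)
    (Kmat : Matrix (Fin n) (Fin n) ℝ) (hKpd : Kmat.PosDef)
    (hKmat : ∀ i j, Kmat i j = ⟪Kfun i, Kfun j⟫_ℝ)
    (e : Fin n → Fin n → ℝ)
    (horth : ∀ i j, e i ⬝ᵥ e j = if i = j then (1 : ℝ) else 0)
    (lam : Fin n → ℝ) (hpos : ∀ i, 0 < lam i)
    (hdec : ∀ i j : Fin n, i ≤ j → lam j ≤ lam i)
    (heig : ∀ i, Kmat.mulVec (e i) = lam i • e i)
    (y : Fin n → ℝ) (η : ℝ)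
    (α : ℕ → Fin n → ℝ)
    (hiter : ∀ t, α (t + 1) = α t - η •
      ((1 - ∑ i : Fin q, (1 - lam ⟨q, hq⟩ / lam (Fin.castLE hq.le i)) •
          vecMulVec (e (Fin.castLE hq.le i)) (e (Fin.castLE hq.le i)) :
        Matrix (Fin n) (Fin n) ℝ).mulVec (Kmat.mulVec (α t) - y))) :
    ∀ t, (∑ j, α (t + 1) j • Kfun j)
      = (∑ j, α t j • Kfun j) - η •
        ((∑ i, (⟪Kfun i, ∑ j, α t j • Kfun j⟫_ℝ - y i) • Kfun i)
          - ∑ i : Fin q, (1 - lam ⟨q, hq⟩ / lam (Fin.castLE hq.le i)) •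
              ⟪(Real.sqrt (lam (Fin.castLE hq.le i)))⁻¹ •
                  ∑ j, e (Fin.castLE hq.le i) j • Kfun j,
                ∑ i', (⟪Kfun i', ∑ j, α t j • Kfun j⟫_ℝ - y i') • Kfun i'⟫_ℝ •
              ((Real.sqrt (lam (Fin.castLE hq.le i)))⁻¹ •
                  ∑ j, e (Fin.castLE hq.le i) j • Kfun j)) := by
  intro t
  set c : Fin q → ℝ := fun i => 1 - lam ⟨q, hq⟩ / lam (Fin.castLE hq.le i) with hc
  set r : Fin n → ℝ := Kmat.mulVec (α t) - y with hr
  have hsym : ∀ i j, Kmat i j = Kmat j i := fun i j => by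
    rw [hKmat, hKmat, real_inner_comm]
  -- f^t(X) = Kmat α
  have hA : ∀ i, ⟪Kfun i, ∑ j, α t j • Kfun j⟫_ℝ - y i = r i := by
    intro i
    simp [hr, inner_sum, real_inner_smul_right, ← hKmat, Matrix.mulVec, dotProduct,
      mul_comm]
  -- inner products of K-expansions
  have hinn : ∀ f g : Fin n → ℝ,
      ⟪∑ j, f j • Kfun j, ∑ i, g i • Kfun i⟫_ℝ = f ⬝ᵥ Kmat.mulVec g := by
    intro f g
    simp only [inner_sum, sum_inner, real_inner_smul_left, real_inner_smul_right,
      ← hKmat, Matrix.mulVec, dotProduct, Finset.mul_sum]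
    rw [Finset.sum_comm]
    exact Finset.sum_congr rfl fun j _ => Finset.sum_congr rfl fun i _ => by ring
  -- eigen relation for dot products
  have hdot : ∀ i : Fin q, e (Fin.castLE hq.le i) ⬝ᵥ Kmat.mulVec r
      = lam (Fin.castLE hq.le i) * (e (Fin.castLE hq.le i) ⬝ᵥ r) := by
    intro i
    have h1 : e (Fin.castLE hq.le i) ⬝ᵥ Kmat.mulVec r
        = Kmat.mulVec (e (Fin.castLE hq.le i)) ⬝ᵥ r := by
      simp only [Matrix.mulVec, dotProduct, Finset.mul_sum, Finset.sum_mul]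
      rw [Finset.sum_comm]
      exact Finset.sum_congr rfl fun j _ => Finset.sum_congr rfl fun k _ => by
        rw [hsym j k]; ring
    rw [h1, heig, smul_dotProduct, smul_eq_mul]
  -- the preconditioner term
  have hpsi : ∀ i : Fin q,
      ⟪(Real.sqrt (lam (Fin.castLE hq.le i)))⁻¹ •
          ∑ j, e (Fin.castLE hq.le i) j • Kfun j,
        ∑ i', r i' • Kfun i'⟫_ℝ •
      ((Real.sqrt (lam (Fin.castLE hq.le i)))⁻¹ •
          ∑ j, e (Fin.castLE hq.le i) j • Kfun j)
      = (e (Fin.castLE hq.le i) ⬝ᵥ r) • ∑ j, e (Fin.castLE hq.le i) j • Kfun j := by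
    intro i
    have hl := hpos (Fin.castLE hq.le i)
    rw [real_inner_smul_left, hinn, hdot, smul_smul]
    congr 1
    have h2 : Real.sqrt (lam (Fin.castLE hq.le i)) * Real.sqrt (lam (Fin.castLE hq.le i))
        = lam (Fin.castLE hq.le i) := Real.mul_self_sqrt hl.le
    have hL : lam (Fin.castLE hq.le i) ≠ 0 := ne_of_gt hl
    have hrw : (Real.sqrt (lam (Fin.castLE hq.le i)))⁻¹ *
        (lam (Fin.castLE hq.le i) * (e (Fin.castLE hq.le i) ⬝ᵥ r)) *
        (Real.sqrt (lam (Fin.castLE hq.le i)))⁻¹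
        = lam (Fin.castLE hq.le i) * (e (Fin.castLE hq.le i) ⬝ᵥ r) *
          (Real.sqrt (lam (Fin.castLE hq.le i)) * Real.sqrt (lam (Fin.castLE hq.le i)))⁻¹ := by
      rw [mul_inv]; ring
    rw [hrw, h2, mul_comm (lam (Fin.castLE hq.le i)), mul_assoc,
      mul_inv_cancel₀ hL, mul_one]
  -- rewrite goal with r
  have hgoal : (∑ i, (⟪Kfun i, ∑ j, α t j • Kfun j⟫_ℝ - y i) • Kfun i)
      = ∑ i, r i • Kfun i := by
    exact Finset.sum_congr rfl fun i _ => by rw [hA]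
  simp only [hA]
  have hRHS : ∀ i : Fin q, (c i) •
      (⟪(Real.sqrt (lam (Fin.castLE hq.le i)))⁻¹ •
          ∑ j, e (Fin.castLE hq.le i) j • Kfun j,
        ∑ i', r i' • Kfun i'⟫_ℝ •
      ((Real.sqrt (lam (Fin.castLE hq.le i)))⁻¹ •
          ∑ j, e (Fin.castLE hq.le i) j • Kfun j))
      = (c i * (e (Fin.castLE hq.le i) ⬝ᵥ r)) • ∑ j, e (Fin.castLE hq.le i) j • Kfun j := by
    intro i
    rw [hpsi i, smul_smul]
  -- expand the iteration
  rw [hiter t]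
  have hM : ((1 - ∑ i : Fin q, c i •
        vecMulVec (e (Fin.castLE hq.le i)) (e (Fin.castLE hq.le i)) :
      Matrix (Fin n) (Fin n) ℝ)).mulVec r
      = r - ∑ i : Fin q, (c i * (e (Fin.castLE hq.le i) ⬝ᵥ r)) • e (Fin.castLE hq.le i) := by
    rw [Matrix.sub_mulVec, Matrix.one_mulVec]
    congr 1
    rw [aux_sum_mulVec]
    exact Finset.sum_congr rfl fun i _ => by
      rw [Matrix.smul_mulVec, aux_vecMulVec_mulVec, smul_smul, mul_comm]
  calc (∑ j, (α t - η • ((1 - ∑ i : Fin q, c i •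
        vecMulVec (e (Fin.castLE hq.le i)) (e (Fin.castLE hq.le i)) :
      Matrix (Fin n) (Fin n) ℝ)).mulVec r) j • Kfun j)
      = ∑ j, (α t j • Kfun j - η • (((1 - ∑ i : Fin q, c i •
          vecMulVec (e (Fin.castLE hq.le i)) (e (Fin.castLE hq.le i)) :
        Matrix (Fin n) (Fin n) ℝ)).mulVec r) j • Kfun j) := by
        exact Finset.sum_congr rfl fun j _ => by
          simp [sub_smul, smul_smul]
    _ = (∑ j, α t j • Kfun j) - η • ∑ j, (((1 - ∑ i : Fin q, c i •
          vecMulVec (e (Fin.castLE hq.le i)) (e (Fin.castLE hq.le i)) :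
        Matrix (Fin n) (Fin n) ℝ)).mulVec r) j • Kfun j := by
        rw [Finset.sum_sub_distrib, ← Finset.smul_sum]
    _ = (∑ j, α t j • Kfun j) - η •
        ((∑ i, r i • Kfun i) - ∑ i : Fin q,
          (c i * (e (Fin.castLE hq.le i) ⬝ᵥ r)) • ∑ j, e (Fin.castLE hq.le i) j • Kfun j) := by
        rw [hM]
        congr 2
        simp only [Pi.sub_apply, sub_smul, Finset.sum_sub_distrib]
        congr 1
        simp only [Finset.sum_apply, Pi.smul_apply, smul_eq_mul, Finset.sum_smul]
        rw [Finset.sum_comm]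
        refine Finset.sum_congr rfl fun i _ => ?_
        rw [Finset.smul_sum]
        refine Finset.sum_congr rfl fun j _ => ?_
        rw [mul_smul]
    _ = (∑ j, α t j • Kfun j) - η •
        ((∑ i, r i • Kfun i)
          - ∑ i : Fin q, (c i) •
              (⟪(Real.sqrt (lam (Fin.castLE hq.le i)))⁻¹ •
                  ∑ j, e (Fin.castLE hq.le i) j • Kfun j,
                ∑ i', r i' • Kfun i'⟫_ℝ •
              ((Real.sqrt (lam (Fin.castLE hq.le i)))⁻¹ •
                  ∑ j, e (Fin.castLE hq.le i) j • Kfun j))) := by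
        simp only [hRHS]
end
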